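/- The number of shuffles of two parenthesis systems of size n equals C(n)·C(n+1), where C(n) is the n-th Catalan number. That is, the number of words w of length 2n on the alphabet {a, ā, b, b̄} such that the subword of letters {a, ā} is a balanced parenthesis word and the subword of letters {b, b̄} is a balanced parenthesis word, equals catalan n * catalan (n+1). -/

import Mathlib

/-- The four letters `a, ā, b, b̄`. -/
inductive L4 : Type
  | a | abar | b | bbar
deriving DecidableEq

/-- `w` is a shuffle of two parenthesis systems: the subword on `{a, ā}` and the
subword on `{b, b̄}` are both balanced parenthesis words. -/
def IsShuffle (w : List L4) : Prop :=
  (w.count L4.a = w.count L4.abar ∧ ∀ p ∈ w.inits, p.count L4.abar ≤ p.count L4.a) ∧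
  (w.count L4.b = w.count L4.bbar ∧ ∀ p ∈ w.inits, p.count L4.bbar ≤ p.count L4.b)

namespace SP
open L4 List

instance : Fintype L4 :=
  ⟨⟨{L4.a, L4.abar, L4.b, L4.bbar}, by decide⟩, fun x => by cases x <;> decide⟩

instance listLenFin {γ : Type*} [Finite γ] (m : ℕ) : Finite {w : List γ // w.length = m} :=
  (List.finite_length_eq γ m).to_subtype

instance : Fintype L4 :=
  ⟨⟨{L4.a, L4.abar, L4.b, L4.bbar}, by decide⟩, fun x => by cases x <;> decide⟩

instance listLenFin' {γ : Type*} [Finite γ] (m : ℕ) (P : List γ → Prop) :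
    Finite {w : List γ // w.length = m ∧ P w} :=
  Finite.of_injective (fun w => (⟨w.1, w.2.1⟩ : {w : List γ // w.length = m}))
    (by intro x y h; apply Subtype.ext; simpa using congrArg Subtype.val h)

lemma card_iff {α : Type*} {P Q : α → Prop} (h : ∀ x, P x ↔ Q x) :
    Nat.card {x // P x} = Nat.card {x // Q x} :=
  Nat.card_congr (Equiv.subtypeEquivRight h)

lemma card_split {α : Type*} [Finite α] (P Q : α → Prop) :
    Nat.card {x // P x} = Nat.card {x // P x ∧ Q x} + Nat.card {x // P x ∧ ¬ Q x} := by
  classical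
  rw [← Nat.card_sum]
  apply Nat.card_congr
  exact ((Equiv.sumCongr (Equiv.subtypeSubtypeEquivSubtypeInter P Q)
    (Equiv.subtypeSubtypeEquivSubtypeInter P (fun x => ¬ Q x))).symm.trans
    (Equiv.sumCompl (fun y : {x // P x} => Q y.1))).symm

lemma card_ie {α : Type*} [Finite α] (P Q1 Q2 : α → Prop) :
    Nat.card {x // P x ∧ Q1 x ∧ Q2 x} + Nat.card {x // P x ∧ ¬ Q1 x}
      + Nat.card {x // P x ∧ ¬ Q2 x}
    = Nat.card {x // P x} + Nat.card {x // P x ∧ ¬ Q1 x ∧ ¬ Q2 x} := by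
  classical
  have h0 := card_split P Q1
  have h1 := card_split (fun x => P x ∧ Q1 x) Q2
  have h2 := card_split (fun x => P x ∧ ¬ Q1 x) Q2
  have h3 := card_split (fun x => P x ∧ ¬ Q2 x) Q1
  have e1 : Nat.card {x // (P x ∧ Q1 x) ∧ Q2 x} = Nat.card {x // P x ∧ Q1 x ∧ Q2 x} :=
    card_iff (by tauto)
  have e2 : Nat.card {x // (P x ∧ ¬ Q1 x) ∧ ¬ Q2 x} = Nat.card {x // P x ∧ ¬ Q1 x ∧ ¬ Q2 x} :=
    card_iff (by tauto)
  have e3 : Nat.card {x // (P x ∧ ¬ Q2 x) ∧ Q1 x} = Nat.card {x // (P x ∧ Q1 x) ∧ ¬ Q2 x} :=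
    card_iff (by tauto)
  have e4 : Nat.card {x // (P x ∧ ¬ Q2 x) ∧ ¬ Q1 x} = Nat.card {x // (P x ∧ ¬ Q1 x) ∧ ¬ Q2 x} :=
    card_iff (by tauto)
  omega

-- ## Counting bool lists
def consF (m r : ℕ) :
    ({u : List Bool // u.length = m ∧ u.count true = r} ⊕
      {u : List Bool // u.length = m ∧ u.count true + 1 = r}) →
    {u : List Bool // u.length = m + 1 ∧ u.count true = r}
  | .inl ⟨u, h⟩ => ⟨false :: u, by simp [h.1, h.2]⟩
  | .inr ⟨u, h⟩ => ⟨true :: u, by simp [h.1]; omega⟩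

lemma consF_bij (m r : ℕ) : Function.Bijective (consF m r) := by
  constructor
  · rintro (⟨u, hu⟩ | ⟨u, hu⟩) (⟨v, hv⟩ | ⟨v, hv⟩) h <;>
      simp [consF] at h <;> simp [h]
  · rintro ⟨u, hu⟩
    match u, hu with
    | true :: u, hu =>
      refine ⟨.inr ⟨u, ⟨by simpa using hu.1, ?_⟩⟩, by simp [consF]⟩
      have := hu.2; simp at this; omega
    | false :: u, hu =>
      refine ⟨.inl ⟨u, ⟨by simpa using hu.1, ?_⟩⟩, by simp [consF]⟩
      have := hu.2; simpa using this

lemma card_boolList : ∀ m r : ℕ,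
    Nat.card {u : List Bool // u.length = m ∧ u.count true = r} = m.choose r := by
  intro m
  induction m with
  | zero =>
    intro r
    cases r with
    | zero =>
      have : Unique {u : List Bool // u.length = 0 ∧ u.count true = 0} :=
        ⟨⟨⟨[], by simp⟩⟩, by rintro ⟨u, hu⟩; exact Subtype.ext (List.length_eq_zero_iff.1 hu.1)⟩
      rw [show Nat.choose 0 0 = 1 from rfl]
      exact Nat.card_unique
    | succ r =>
      have : IsEmpty {u : List Bool // u.length = 0 ∧ u.count true = r + 1} := by
        constructor; rintro ⟨u, hu⟩
        have := List.length_eq_zero_iff.1 hu.1; subst this; simp at hu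
      rw [Nat.card_of_isEmpty]; simp
  | succ m ih =>
    intro r
    have := Nat.card_congr (Equiv.ofBijective _ (consF_bij m r))
    rw [Nat.card_sum, ih r] at this
    rw [← this]
    cases r with
    | zero =>
      have : IsEmpty {u : List Bool // u.length = m ∧ u.count true + 1 = 0} := by
        constructor; rintro ⟨u, hu⟩; omega
      simp
    | succ r =>
      have e : Nat.card {u : List Bool // u.length = m ∧ u.count true + 1 = r + 1}
          = Nat.card {u : List Bool // u.length = m ∧ u.count true = r} :=
        card_iff (by intro u; omega)
      rw [e, ih r, Nat.choose_succ_succ]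
      simp only [Nat.succ_eq_add_one]
      omega

-- ## Encoding words into pairs of bool lists
def sEnc : L4 → Bool | a => true | b => true | abar => false | bbar => false
def tEnc : L4 → Bool | a => true | bbar => true | abar => false | b => false
def dec : Bool → Bool → L4
  | true, true => a | true, false => b | false, true => bbar | false, false => abar

lemma countS (w : List L4) : (w.map sEnc).count true = w.count a + w.count b := by
  induction w with
  | nil => simp
  | cons x xs ih => cases x <;> simp [List.count_cons, sEnc, ih] <;> omega

lemma countT (w : List L4) : (w.map tEnc).count true = w.count a + w.count bbar := by
  induction w with
  | nil => simp
  | cons x xs ih => cases x <;> simp [List.count_cons, tEnc, ih] <;> omega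

lemma zip_dec_enc (w : List L4) : List.zipWith dec (w.map sEnc) (w.map tEnc) = w := by
  induction w with
  | nil => simp
  | cons x xs ih => cases x <;> simp [sEnc, tEnc, dec, ih]

lemma enc_zip_s : ∀ (u v : List Bool), u.length = v.length →
    (List.zipWith dec u v).map sEnc = u := by
  intro u
  induction u with
  | nil => simp
  | cons x xs ih =>
    rintro (_ | ⟨y, ys⟩) h
    · simp at h
    · cases x <;> cases y <;> simp_all [dec, sEnc]

lemma enc_zip_t : ∀ (u v : List Bool), u.length = v.length →
    (List.zipWith dec u v).map tEnc = v := by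
  intro u
  induction u with
  | nil => rintro (_ | ⟨y, ys⟩) h <;> simp_all
  | cons x xs ih =>
    rintro (_ | ⟨y, ys⟩) h
    · simp at h
    · cases x <;> cases y <;> simp_all [dec, tEnc]

lemma card_count (m r s : ℕ) :
    Nat.card {w : List L4 // w.length = m ∧
        w.count a + w.count b = r ∧ w.count a + w.count bbar = s}
      = m.choose r * m.choose s := by
  rw [← card_boolList m r, ← card_boolList m s, ← Nat.card_prod]
  apply Nat.card_congr
  refine ⟨fun w => (⟨w.1.map sEnc, by simp [w.2.1], by rw [countS]; exact w.2.2.1⟩,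
                    ⟨w.1.map tEnc, by simp [w.2.1], by rw [countT]; exact w.2.2.2⟩),
          fun p => ⟨List.zipWith dec p.1.1 p.2.1, ?_, ?_, ?_⟩, ?_, ?_⟩
  · simp [p.1.2.1, p.2.2.1]
  · have h : p.1.1.length = p.2.1.length := by rw [p.1.2.1, p.2.2.1]
    have := countS (List.zipWith dec p.1.1 p.2.1)
    rw [enc_zip_s _ _ h] at this
    rw [← this]; exact p.1.2.2
  · have h : p.1.1.length = p.2.1.length := by rw [p.1.2.1, p.2.2.1]
    have := countT (List.zipWith dec p.1.1 p.2.1)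
    rw [enc_zip_t _ _ h] at this
    rw [← this]; exact p.2.2.2
  · intro w; exact Subtype.ext (zip_dec_enc w.1)
  · intro p
    have h : p.1.1.length = p.2.1.length := by rw [p.1.2.1, p.2.2.1]
    ext : 1 <;> [exact Subtype.ext (enc_zip_s _ _ h); exact Subtype.ext (enc_zip_t _ _ h)]

-- ## Prefix predicates
def GoodA (c : ℕ) (w : List L4) : Prop := ∀ p ∈ w.inits, p.count abar ≤ c + p.count a
def GoodB (c : ℕ) (w : List L4) : Prop := ∀ p ∈ w.inits, p.count bbar ≤ c + p.count b

lemma goodA_nil (c : ℕ) : GoodA c [] := by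
  intro p hp; simp at hp; simp [hp]

lemma goodB_nil (c : ℕ) : GoodB c [] := by
  intro p hp; simp at hp; simp [hp]

lemma good_cons_aux {c : ℕ} {x : L4} {xs : List L4} {t : L4} :
    (∀ p ∈ (x :: xs).inits, p.count t ≤ c + p.count L4.a) ↔
      (∀ p ∈ xs.inits, (x :: p).count t ≤ c + (x :: p).count L4.a) := by
  rw [List.inits_cons]
  constructor
  · intro h p hp
    exact h (x :: p) (by
      simp only [List.mem_cons]
      exact Or.inr (List.mem_map_of_mem hp))
  · rintro h p hp
    simp only [List.mem_cons, List.mem_map] at hp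
    rcases hp with rfl | ⟨q, hq, rfl⟩
    · simp
    · exact h q hq

lemma goodA_cons_a {c : ℕ} {xs : List L4} : GoodA c (a :: xs) ↔ GoodA (c + 1) xs := by
  unfold GoodA
  rw [good_cons_aux]
  refine forall₂_congr fun p hp => by simp [List.count_cons]; omega

lemma goodA_cons_abar_succ {c : ℕ} {xs : List L4} :
    GoodA (c + 1) (abar :: xs) ↔ GoodA c xs := by
  unfold GoodA
  rw [good_cons_aux]
  refine forall₂_congr fun p hp => by simp [List.count_cons]; omega

lemma goodA_cons_abar_zero {xs : List L4} : ¬ GoodA 0 (abar :: xs) := by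
  intro h
  have := h [abar] ((List.mem_inits _ _).2 ⟨xs, rfl⟩)
  simp [List.count_cons] at this

lemma goodA_cons_b {c : ℕ} {xs : List L4} : GoodA c (b :: xs) ↔ GoodA c xs := by
  unfold GoodA
  rw [good_cons_aux]
  refine forall₂_congr fun p hp => by simp [List.count_cons]

lemma goodA_cons_bbar {c : ℕ} {xs : List L4} : GoodA c (bbar :: xs) ↔ GoodA c xs := by
  unfold GoodA
  rw [good_cons_aux]
  refine forall₂_congr fun p hp => by simp [List.count_cons]

lemma goodA_self {c : ℕ} {w : List L4} (h : GoodA c w) : w.count abar ≤ c + w.count a :=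
  h w ((List.mem_inits w w).2 (List.prefix_refl w))

lemma good_cons_auxB {c : ℕ} {x : L4} {xs : List L4} {t : L4} :
    (∀ p ∈ (x :: xs).inits, p.count t ≤ c + p.count L4.b) ↔
      (∀ p ∈ xs.inits, (x :: p).count t ≤ c + (x :: p).count L4.b) := by
  rw [List.inits_cons]
  constructor
  · intro h p hp
    exact h (x :: p) (by
      simp only [List.mem_cons]
      exact Or.inr (List.mem_map_of_mem hp))
  · rintro h p hp
    simp only [List.mem_cons, List.mem_map] at hp
    rcases hp with rfl | ⟨q, hq, rfl⟩
    · simp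
    · exact h q hq

lemma goodB_cons_b {c : ℕ} {xs : List L4} : GoodB c (b :: xs) ↔ GoodB (c + 1) xs := by
  unfold GoodB
  rw [good_cons_auxB]
  refine forall₂_congr fun p hp => by simp [List.count_cons]; omega

lemma goodB_cons_bbar_succ {c : ℕ} {xs : List L4} :
    GoodB (c + 1) (bbar :: xs) ↔ GoodB c xs := by
  unfold GoodB
  rw [good_cons_auxB]
  refine forall₂_congr fun p hp => by simp [List.count_cons]; omega

lemma goodB_cons_bbar_zero {xs : List L4} : ¬ GoodB 0 (bbar :: xs) := by
  intro h
  have := h [bbar] ((List.mem_inits _ _).2 ⟨xs, rfl⟩)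
  simp [List.count_cons] at this

lemma goodB_cons_a {c : ℕ} {xs : List L4} : GoodB c (a :: xs) ↔ GoodB c xs := by
  unfold GoodB
  rw [good_cons_auxB]
  refine forall₂_congr fun p hp => by simp [List.count_cons]

lemma goodB_cons_abar {c : ℕ} {xs : List L4} : GoodB c (abar :: xs) ↔ GoodB c xs := by
  unfold GoodB
  rw [good_cons_auxB]
  refine forall₂_congr fun p hp => by simp [List.count_cons]

lemma goodB_self {c : ℕ} {w : List L4} (h : GoodB c w) : w.count bbar ≤ c + w.count b :=
  h w ((List.mem_inits w w).2 (List.prefix_refl w))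

-- ## Reflection on a-letters
def flipA : L4 → L4 | a => abar | abar => a | b => b | bbar => bbar

lemma flipA_flipA (l : List L4) : (l.map flipA).map flipA = l := by
  induction l with
  | nil => simp
  | cons x xs ih => cases x <;> simp [flipA, ih]

lemma count_flipA_a (l : List L4) : (l.map flipA).count a = l.count abar := by
  induction l with
  | nil => simp
  | cons x xs ih => cases x <;> simp [flipA, List.count_cons, ih]

lemma count_flipA_abar (l : List L4) : (l.map flipA).count abar = l.count a := by
  induction l with
  | nil => simp
  | cons x xs ih => cases x <;> simp [flipA, List.count_cons, ih]

lemma count_flipA_b (l : List L4) : (l.map flipA).count b = l.count b := by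
  induction l with
  | nil => simp
  | cons x xs ih => cases x <;> simp [flipA, List.count_cons, ih]

lemma count_flipA_bbar (l : List L4) : (l.map flipA).count bbar = l.count bbar := by
  induction l with
  | nil => simp
  | cons x xs ih => cases x <;> simp [flipA, List.count_cons, ih]

lemma goodB_map_flipA {l : List L4} : ∀ {d : ℕ}, (GoodB d (l.map flipA) ↔ GoodB d l) := by
  induction l with
  | nil => intro d; simp [flipA]
  | cons x xs ih =>
    intro d
    cases x with
    | a => simpa [flipA, goodB_cons_abar, goodB_cons_a] using ih
    | abar => simpa [flipA, goodB_cons_a, goodB_cons_abar] using ih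
    | b => simpa [flipA, goodB_cons_b] using ih
    | bbar =>
      cases d with
      | zero =>
        simp only [List.map_cons, flipA]
        exact iff_of_false goodB_cons_bbar_zero goodB_cons_bbar_zero
      | succ d => simpa [flipA, goodB_cons_bbar_succ] using ih

def auxA : ℕ → List L4 → List L4
  | _, [] => []
  | c, L4.a :: xs => L4.a :: auxA (c+1) xs
  | 0, L4.abar :: xs => L4.abar :: xs.map flipA
  | c+1, L4.abar :: xs => L4.abar :: auxA c xs
  | c, L4.b :: xs => L4.b :: auxA c xs
  | c, L4.bbar :: xs => L4.bbar :: auxA c xs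

lemma aa_len (w : List L4) : ∀ c, (auxA c w).length = w.length := by
  induction w with
  | nil => intro c; simp [auxA]
  | cons x xs ih =>
    intro c
    cases x with
    | a => simp [auxA, ih]
    | abar => cases c with
      | zero => simp [auxA]
      | succ c => simp [auxA, ih]
    | b => simp [auxA, ih]
    | bbar => simp [auxA, ih]

lemma aa_count_b (w : List L4) : ∀ c, (auxA c w).count b = w.count b := by
  induction w with
  | nil => intro c; simp [auxA]
  | cons x xs ih =>
    intro c
    cases x with
    | a => simp [auxA, List.count_cons, ih]
    | abar => cases c with
      | zero => simp [auxA, List.count_cons, count_flipA_b]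
      | succ c => simp [auxA, List.count_cons, ih]
    | b => simp [auxA, List.count_cons, ih]
    | bbar => simp [auxA, List.count_cons, ih]

lemma aa_count_bbar (w : List L4) : ∀ c, (auxA c w).count bbar = w.count bbar := by
  induction w with
  | nil => intro c; simp [auxA]
  | cons x xs ih =>
    intro c
    cases x with
    | a => simp [auxA, List.count_cons, ih]
    | abar => cases c with
      | zero => simp [auxA, List.count_cons, count_flipA_bbar]
      | succ c => simp [auxA, List.count_cons, ih]
    | b => simp [auxA, List.count_cons, ih]
    | bbar => simp [auxA, List.count_cons, ih]

lemma aa_bal (w : List L4) : ∀ c, ¬ GoodA c w →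
    (auxA c w).count a + w.count a + 2*c + 2 = (auxA c w).count abar + w.count abar := by
  induction w with
  | nil => intro c h; exact absurd (goodA_nil c) h
  | cons x xs ih =>
    intro c h
    cases x with
    | a =>
      have h' : ¬ GoodA (c+1) xs := fun hg => h (goodA_cons_a.2 hg)
      have := ih (c+1) h'
      simp [auxA, List.count_cons]
      omega
    | abar => cases c with
      | zero =>
        simp [auxA, List.count_cons, count_flipA_a, count_flipA_abar]
        omega
      | succ c =>
        have h' : ¬ GoodA c xs := fun hg => h (goodA_cons_abar_succ.2 hg)
        have := ih c h'
        simp [auxA, List.count_cons]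
        omega
    | b =>
      have h' : ¬ GoodA c xs := fun hg => h (goodA_cons_b.2 hg)
      have := ih c h'
      simp [auxA, List.count_cons]
      omega
    | bbar =>
      have h' : ¬ GoodA c xs := fun hg => h (goodA_cons_bbar.2 hg)
      have := ih c h'
      simp [auxA, List.count_cons]
      omega

lemma aa_invol (w : List L4) : ∀ c, ¬ GoodA c w → auxA c (auxA c w) = w := by
  induction w with
  | nil => intro c h; exact absurd (goodA_nil c) h
  | cons x xs ih =>
    intro c h
    cases x with
    | a =>
      have h' : ¬ GoodA (c+1) xs := fun hg => h (goodA_cons_a.2 hg)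
      simp [auxA, ih (c+1) h']
    | abar => cases c with
      | zero => simpa [auxA, List.map_map] using flipA_flipA xs
      | succ c =>
        have h' : ¬ GoodA c xs := fun hg => h (goodA_cons_abar_succ.2 hg)
        simp [auxA, ih c h']
    | b =>
      have h' : ¬ GoodA c xs := fun hg => h (goodA_cons_b.2 hg)
      simp [auxA, ih c h']
    | bbar =>
      have h' : ¬ GoodA c xs := fun hg => h (goodA_cons_bbar.2 hg)
      simp [auxA, ih c h']

lemma aa_bad (w : List L4) : ∀ c, ¬ GoodA c w → ¬ GoodA c (auxA c w) := by
  induction w with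
  | nil => intro c h; exact absurd (goodA_nil c) h
  | cons x xs ih =>
    intro c h
    cases x with
    | a =>
      have h' : ¬ GoodA (c+1) xs := fun hg => h (goodA_cons_a.2 hg)
      simpa [auxA, goodA_cons_a] using ih (c+1) h'
    | abar => cases c with
      | zero => simpa [auxA] using goodA_cons_abar_zero
      | succ c =>
        have h' : ¬ GoodA c xs := fun hg => h (goodA_cons_abar_succ.2 hg)
        simpa [auxA, goodA_cons_abar_succ] using ih c h'
    | b =>
      have h' : ¬ GoodA c xs := fun hg => h (goodA_cons_b.2 hg)
      simpa [auxA, goodA_cons_b] using ih c h'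
    | bbar =>
      have h' : ¬ GoodA c xs := fun hg => h (goodA_cons_bbar.2 hg)
      simpa [auxA, goodA_cons_bbar] using ih c h'

lemma aa_goodB (w : List L4) : ∀ c d, (GoodB d (auxA c w) ↔ GoodB d w) := by
  induction w with
  | nil => intro c d; simp [auxA]
  | cons x xs ih =>
    intro c d
    cases x with
    | a => simpa [auxA, goodB_cons_a] using ih (c+1) d
    | abar => cases c with
      | zero => simpa [auxA, goodB_cons_abar] using goodB_map_flipA
      | succ c => simpa [auxA, goodB_cons_abar] using ih c d
    | b => simpa [auxA, goodB_cons_b] using ih c (d+1)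
    | bbar => cases d with
      | zero =>
        simp only [auxA]
        exact iff_of_false goodB_cons_bbar_zero goodB_cons_bbar_zero
      | succ d => simpa [auxA, goodB_cons_bbar_succ] using ih c d

-- ## Reflection on b-letters
def flipB : L4 → L4 | a => a | abar => abar | b => bbar | bbar => b

lemma flipB_flipB (l : List L4) : (l.map flipB).map flipB = l := by
  induction l with
  | nil => simp
  | cons x xs ih => cases x <;> simp [flipB, ih]

lemma count_flipB_b (l : List L4) : (l.map flipB).count b = l.count bbar := by
  induction l with
  | nil => simp
  | cons x xs ih => cases x <;> simp [flipB, List.count_cons, ih]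

lemma count_flipB_bbar (l : List L4) : (l.map flipB).count bbar = l.count b := by
  induction l with
  | nil => simp
  | cons x xs ih => cases x <;> simp [flipB, List.count_cons, ih]

lemma count_flipB_a (l : List L4) : (l.map flipB).count a = l.count a := by
  induction l with
  | nil => simp
  | cons x xs ih => cases x <;> simp [flipB, List.count_cons, ih]

lemma count_flipB_abar (l : List L4) : (l.map flipB).count abar = l.count abar := by
  induction l with
  | nil => simp
  | cons x xs ih => cases x <;> simp [flipB, List.count_cons, ih]

lemma goodA_map_flipB {l : List L4} : ∀ {d : ℕ}, (GoodA d (l.map flipB) ↔ GoodA d l) := by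
  induction l with
  | nil => intro d; simp [flipB]
  | cons x xs ih =>
    intro d
    cases x with
    | b => simpa [flipB, goodA_cons_bbar, goodA_cons_b] using ih
    | bbar => simpa [flipB, goodA_cons_b, goodA_cons_bbar] using ih
    | a => simpa [flipB, goodA_cons_a] using ih
    | abar =>
      cases d with
      | zero =>
        simp only [List.map_cons, flipB]
        exact iff_of_false goodA_cons_abar_zero goodA_cons_abar_zero
      | succ d => simpa [flipB, goodA_cons_abar_succ] using ih

def auxB : ℕ → List L4 → List L4
  | _, [] => []
  | c, L4.b :: xs => L4.b :: auxB (c+1) xs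
  | 0, L4.bbar :: xs => L4.bbar :: xs.map flipB
  | c+1, L4.bbar :: xs => L4.bbar :: auxB c xs
  | c, L4.a :: xs => L4.a :: auxB c xs
  | c, L4.abar :: xs => L4.abar :: auxB c xs

lemma ab_len (w : List L4) : ∀ c, (auxB c w).length = w.length := by
  induction w with
  | nil => intro c; simp [auxB]
  | cons x xs ih =>
    intro c
    cases x with
    | b => simp [auxB, ih]
    | bbar => cases c with
      | zero => simp [auxB]
      | succ c => simp [auxB, ih]
    | a => simp [auxB, ih]
    | abar => simp [auxB, ih]

lemma ab_count_a (w : List L4) : ∀ c, (auxB c w).count a = w.count a := by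
  induction w with
  | nil => intro c; simp [auxB]
  | cons x xs ih =>
    intro c
    cases x with
    | b => simp [auxB, List.count_cons, ih]
    | bbar => cases c with
      | zero => simp [auxB, List.count_cons, count_flipB_a]
      | succ c => simp [auxB, List.count_cons, ih]
    | a => simp [auxB, List.count_cons, ih]
    | abar => simp [auxB, List.count_cons, ih]

lemma ab_count_abar (w : List L4) : ∀ c, (auxB c w).count abar = w.count abar := by
  induction w with
  | nil => intro c; simp [auxB]
  | cons x xs ih =>
    intro c
    cases x with
    | b => simp [auxB, List.count_cons, ih]
    | bbar => cases c with
      | zero => simp [auxB, List.count_cons, count_flipB_abar]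
      | succ c => simp [auxB, List.count_cons, ih]
    | a => simp [auxB, List.count_cons, ih]
    | abar => simp [auxB, List.count_cons, ih]

lemma ab_bal (w : List L4) : ∀ c, ¬ GoodB c w →
    (auxB c w).count b + w.count b + 2*c + 2 = (auxB c w).count bbar + w.count bbar := by
  induction w with
  | nil => intro c h; exact absurd (goodB_nil c) h
  | cons x xs ih =>
    intro c h
    cases x with
    | b =>
      have h' : ¬ GoodB (c+1) xs := fun hg => h (goodB_cons_b.2 hg)
      have := ih (c+1) h'
      simp [auxB, List.count_cons]
      omega
    | bbar => cases c with
      | zero =>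
        simp [auxB, List.count_cons, count_flipB_b, count_flipB_bbar]
        omega
      | succ c =>
        have h' : ¬ GoodB c xs := fun hg => h (goodB_cons_bbar_succ.2 hg)
        have := ih c h'
        simp [auxB, List.count_cons]
        omega
    | a =>
      have h' : ¬ GoodB c xs := fun hg => h (goodB_cons_a.2 hg)
      have := ih c h'
      simp [auxB, List.count_cons]
      omega
    | abar =>
      have h' : ¬ GoodB c xs := fun hg => h (goodB_cons_abar.2 hg)
      have := ih c h'
      simp [auxB, List.count_cons]
      omega

lemma ab_invol (w : List L4) : ∀ c, ¬ GoodB c w → auxB c (auxB c w) = w := by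
  induction w with
  | nil => intro c h; exact absurd (goodB_nil c) h
  | cons x xs ih =>
    intro c h
    cases x with
    | b =>
      have h' : ¬ GoodB (c+1) xs := fun hg => h (goodB_cons_b.2 hg)
      simp [auxB, ih (c+1) h']
    | bbar => cases c with
      | zero => simpa [auxB, List.map_map] using flipB_flipB xs
      | succ c =>
        have h' : ¬ GoodB c xs := fun hg => h (goodB_cons_bbar_succ.2 hg)
        simp [auxB, ih c h']
    | a =>
      have h' : ¬ GoodB c xs := fun hg => h (goodB_cons_a.2 hg)
      simp [auxB, ih c h']
    | abar =>
      have h' : ¬ GoodB c xs := fun hg => h (goodB_cons_abar.2 hg)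
      simp [auxB, ih c h']

lemma ab_bad (w : List L4) : ∀ c, ¬ GoodB c w → ¬ GoodB c (auxB c w) := by
  induction w with
  | nil => intro c h; exact absurd (goodB_nil c) h
  | cons x xs ih =>
    intro c h
    cases x with
    | b =>
      have h' : ¬ GoodB (c+1) xs := fun hg => h (goodB_cons_b.2 hg)
      simpa [auxB, goodB_cons_b] using ih (c+1) h'
    | bbar => cases c with
      | zero => simpa [auxB] using goodB_cons_bbar_zero
      | succ c =>
        have h' : ¬ GoodB c xs := fun hg => h (goodB_cons_bbar_succ.2 hg)
        simpa [auxB, goodB_cons_bbar_succ] using ih c h'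
    | a =>
      have h' : ¬ GoodB c xs := fun hg => h (goodB_cons_a.2 hg)
      simpa [auxB, goodB_cons_a] using ih c h'
    | abar =>
      have h' : ¬ GoodB c xs := fun hg => h (goodB_cons_abar.2 hg)
      simpa [auxB, goodB_cons_abar] using ih c h'

lemma ab_goodA (w : List L4) : ∀ c d, (GoodA d (auxB c w) ↔ GoodA d w) := by
  induction w with
  | nil => intro c d; simp [auxB]
  | cons x xs ih =>
    intro c d
    cases x with
    | b => simpa [auxB, goodA_cons_b] using ih (c+1) d
    | bbar => cases c with
      | zero => simpa [auxB, goodA_cons_bbar] using goodA_map_flipB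
      | succ c => simpa [auxB, goodA_cons_bbar] using ih c d
    | a => simpa [auxB, goodA_cons_a] using ih c (d+1)
    | abar => cases d with
      | zero =>
        simp only [auxB]
        exact iff_of_false goodA_cons_abar_zero goodA_cons_abar_zero
      | succ d => simpa [auxB, goodA_cons_abar_succ] using ih c d

-- ## Arithmetic identity
lemma catalan_identity (m : ℕ) :
    catalan (m+1) * catalan (m+2)
      + (2*(m+1)).choose (m+2) * (2*(m+1)).choose (m+2)
      + (2*(m+1)).choose (m+2) * (2*(m+1)).choose (m+2)
    = (2*(m+1)).choose (m+1) * (2*(m+1)).choose (m+1)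
      + (2*(m+1)).choose (m+3) * (2*(m+1)).choose (m+1) := by
  set B0 := (2*(m+1)).choose (m+1) with hB0
  set B1 := (2*(m+1)).choose (m+2) with hB1
  set B2 := (2*(m+1)).choose (m+3) with hB2
  have f1 : (m+2) * catalan (m+1) = B0 := by
    have := succ_mul_catalan_eq_centralBinom (m+1)
    rw [Nat.centralBinom_eq_two_mul_choose] at this
    exact this
  have f2 : (m+3) * catalan (m+2) = Nat.centralBinom (m+2) :=
    succ_mul_catalan_eq_centralBinom (m+2)
  have f3 : (m+2) * Nat.centralBinom (m+2) = 2*(2*m+3) * B0 := by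
    have := Nat.succ_mul_centralBinom_succ (m+1)
    rw [Nat.centralBinom_eq_two_mul_choose (m+1)] at this
    rw [show 2*(m+1)+1 = 2*m+3 from by omega] at this
    exact this
  have f4 : B1 * (m+2) = B0 * (m+1) := by
    have := Nat.choose_succ_right_eq (2*(m+1)) (m+1)
    rw [show 2*(m+1) - (m+1) = m+1 from by omega] at this
    exact this
  have f5 : B2 * (m+3) = B1 * m := by
    have := Nat.choose_succ_right_eq (2*(m+1)) (m+2)
    rw [show 2*(m+1) - (m+2) = m from by omega] at this
    exact this
  have key : (m+2)*(m+2)*(m+3) * (catalan (m+1) * catalan (m+2) + B1*B1 + B1*B1)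
      = (m+2)*(m+2)*(m+3) * (B0*B0 + B2*B0) := by
    have hX : (m+2)*(m+2)*(m+3) * (catalan (m+1) * catalan (m+2))
        = 2*(2*m+3) * (B0 * B0) := by
      calc (m+2)*(m+2)*(m+3) * (catalan (m+1) * catalan (m+2))
          = (m+2) * (((m+2) * catalan (m+1)) * ((m+3) * catalan (m+2))) := by ring
        _ = (m+2) * (B0 * Nat.centralBinom (m+2)) := by rw [f1, f2]
        _ = B0 * ((m+2) * Nat.centralBinom (m+2)) := by ring
        _ = B0 * (2*(2*m+3) * B0) := by rw [f3]
        _ = 2*(2*m+3) * (B0 * B0) := by ring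
    have hB1e : (m+2)*(m+2)*(m+3) * (B1*B1 + B1*B1)
        = 2*((m+1)*(m+1))*(m+3) * (B0*B0) := by
      calc (m+2)*(m+2)*(m+3) * (B1*B1 + B1*B1)
          = (m+3)*2*((B1*(m+2))*(B1*(m+2))) := by ring
        _ = (m+3)*2*((B0*(m+1))*(B0*(m+1))) := by rw [f4]
        _ = 2*((m+1)*(m+1))*(m+3) * (B0*B0) := by ring
    have hB2e : (m+2)*(m+2)*(m+3) * (B2*B0) = (m+1)*m*(m+2) * (B0*B0) := by
      calc (m+2)*(m+2)*(m+3) * (B2*B0)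
          = (m+2)*((B2*(m+3))*(m+2))*B0 := by ring
        _ = (m+2)*((B1*m)*(m+2))*B0 := by rw [f5]
        _ = m*(m+2)*((B1*(m+2))*B0) := by ring
        _ = m*(m+2)*((B0*(m+1))*B0) := by rw [f4]
        _ = (m+1)*m*(m+2) * (B0*B0) := by ring
    calc (m+2)*(m+2)*(m+3) * (catalan (m+1) * catalan (m+2) + B1*B1 + B1*B1)
        = (m+2)*(m+2)*(m+3) * (catalan (m+1) * catalan (m+2))
          + (m+2)*(m+2)*(m+3) * (B1*B1 + B1*B1) := by ring
      _ = 2*(2*m+3) * (B0 * B0) + 2*((m+1)*(m+1))*(m+3) * (B0*B0) := by rw [hX, hB1e]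
      _ = (m+2)*(m+2)*(m+3) * (B0*B0) + (m+1)*m*(m+2) * (B0*B0) := by ring
      _ = (m+2)*(m+2)*(m+3) * (B0*B0) + (m+2)*(m+2)*(m+3) * (B2*B0) := by rw [hB2e]
      _ = (m+2)*(m+2)*(m+3) * (B0*B0 + B2*B0) := by ring
  have hpos : 0 < (m+2)*(m+2)*(m+3) := by positivity
  exact Nat.eq_of_mul_eq_mul_left hpos key

-- ## Assembly
lemma count_total (w : List L4) :
    w.count a + w.count abar + w.count b + w.count bbar = w.length := by
  induction w with
  | nil => simp
  | cons x xs ih => cases x <;> simp [List.count_cons] <;> omega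

def reflEquiv {P Q : List L4 → Prop} (f : List L4 → List L4)
    (hPQ : ∀ w, P w → Q (f w)) (hQP : ∀ w, Q w → P (f w))
    (h1 : ∀ w, P w → f (f w) = w) (h2 : ∀ w, Q w → f (f w) = w) :
    {w // P w} ≃ {w // Q w} where
  toFun x := ⟨f x.1, hPQ x.1 x.2⟩
  invFun y := ⟨f y.1, hQP y.1 y.2⟩
  left_inv x := Subtype.ext (h1 x.1 x.2)
  right_inv y := Subtype.ext (h2 y.1 y.2)

lemma card_sub (M : ℕ) (P : List L4 → Prop) :
    Nat.card {y : {w : List L4 // w.length = M} // P y.1}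
      = Nat.card {w : List L4 // w.length = M ∧ P w} :=
  Nat.card_congr (Equiv.subtypeSubtypeEquivSubtypeInter _ _)

lemma card_ie_list (M : ℕ) (P Q1 Q2 : List L4 → Prop) :
    Nat.card {w : List L4 // w.length = M ∧ (P w ∧ Q1 w ∧ Q2 w)}
      + Nat.card {w : List L4 // w.length = M ∧ (P w ∧ ¬ Q1 w)}
      + Nat.card {w : List L4 // w.length = M ∧ (P w ∧ ¬ Q2 w)}
    = Nat.card {w : List L4 // w.length = M ∧ P w}
      + Nat.card {w : List L4 // w.length = M ∧ (P w ∧ ¬ Q1 w ∧ ¬ Q2 w)} := by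
  have h := card_ie (α := {w : List L4 // w.length = M})
    (fun y => P y.1) (fun y => Q1 y.1) (fun y => Q2 y.1)
  rw [card_sub M (fun w => P w ∧ Q1 w ∧ Q2 w), card_sub M (fun w => P w ∧ ¬ Q1 w),
      card_sub M (fun w => P w ∧ ¬ Q2 w), card_sub M P,
      card_sub M (fun w => P w ∧ ¬ Q1 w ∧ ¬ Q2 w)] at h
  exact h

def BalAB (w : List L4) : Prop := w.count a = w.count abar ∧ w.count b = w.count bbar

end SP


open SP L4

/-- The number of parenthesis-shuffles of size `n` is `catalan n * catalan (n+1)`. -/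
theorem shuffle_card (n : ℕ) :
    Nat.card {w : List L4 // w.length = 2 * n ∧ IsShuffle w} = catalan n * catalan (n + 1) := by
  obtain _ | m := n
  · have hu : Unique {w : List L4 // w.length = 2 * 0 ∧ IsShuffle w} :=
      { default := ⟨[], by refine ⟨rfl, ⟨rfl, ?_⟩, ⟨rfl, ?_⟩⟩ <;> simp⟩
        uniq := by rintro ⟨w, hw, _⟩; exact Subtype.ext (List.length_eq_zero_iff.1 hw) }
    rw [show catalan 0 * catalan (0+1) = 1 by simp]
    exact Nat.card_unique
  · show Nat.card {w : List L4 // w.length = 2*(m+1) ∧ IsShuffle w}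
      = catalan (m+1) * catalan (m+2)
    have hIE := card_ie_list (2*(m+1)) BalAB (GoodA 0) (GoodB 0)
    -- identification of the shuffle set
    have hT : Nat.card {w : List L4 // w.length = 2*(m+1) ∧ IsShuffle w}
        = Nat.card {w : List L4 // w.length = 2*(m+1) ∧ (BalAB w ∧ GoodA 0 w ∧ GoodB 0 w)} :=
      card_iff (fun w => by
        simp only [IsShuffle, BalAB, GoodA, GoodB, zero_add]
        tauto)
    -- the balanced count
    have hBal : Nat.card {w : List L4 // w.length = 2*(m+1) ∧ BalAB w}
        = (2*(m+1)).choose (m+1) * (2*(m+1)).choose (m+1) := by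
      rw [card_iff (fun w => ?_)]
      · exact card_count (2*(m+1)) (m+1) (m+1)
      · simp only [BalAB]
        constructor
        · rintro ⟨h1, h2, h3⟩
          have := count_total w
          exact ⟨h1, by omega, by omega⟩
        · rintro ⟨h1, h2, h3⟩
          have := count_total w
          exact ⟨h1, by omega, by omega⟩
    -- symmetry of binomials
    have hsym : (2*(m+1)).choose m = (2*(m+1)).choose (m+2) := by
      have h := Nat.choose_symm (n := 2*(m+1)) (k := m+2) (by omega)
      rw [show 2*(m+1) - (m+2) = m from by omega] at h
      exact h
    -- the A-reflection
    have eA : Nat.card {w : List L4 // w.length = 2*(m+1) ∧ (BalAB w ∧ ¬ GoodA 0 w)}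
        = Nat.card {w : List L4 // w.length = 2*(m+1) ∧
            (w.count abar = w.count a + 2 ∧ w.count b = w.count bbar)} := by
      refine Nat.card_congr (reflEquiv (auxA 0) ?_ ?_ ?_ ?_)
      · intro w hw
        obtain ⟨hl, hbal, hbad⟩ := hw
        simp only [BalAB] at hbal
        refine ⟨by rw [aa_len]; exact hl, ?_, ?_⟩
        · have := aa_bal w 0 hbad; omega
        · rw [aa_count_b, aa_count_bbar]; exact hbal.2
      · intro w hw
        obtain ⟨hl, hA2, hB⟩ := hw
        have hbad : ¬ GoodA 0 w := fun hg => by have := goodA_self hg; omega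
        refine ⟨by rw [aa_len]; exact hl, ⟨?_, ?_⟩, aa_bad w 0 hbad⟩
        · have := aa_bal w 0 hbad; omega
        · rw [aa_count_b, aa_count_bbar]; exact hB
      · intro w hw; exact aa_invol w 0 hw.2.2
      · intro w hw
        refine aa_invol w 0 (fun hg => ?_)
        have := goodA_self hg
        omega
    have hEA : Nat.card {w : List L4 // w.length = 2*(m+1) ∧ (BalAB w ∧ ¬ GoodA 0 w)}
        = (2*(m+1)).choose (m+2) * (2*(m+1)).choose (m+2) := by
      rw [eA, card_iff (fun w => ?_), card_count (2*(m+1)) m m, hsym]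
      constructor
      · rintro ⟨h1, h2, h3⟩
        have := count_total w
        exact ⟨h1, by omega, by omega⟩
      · rintro ⟨h1, h2, h3⟩
        have := count_total w
        exact ⟨h1, by omega, by omega⟩
    -- the B-reflection
    have eB : Nat.card {w : List L4 // w.length = 2*(m+1) ∧ (BalAB w ∧ ¬ GoodB 0 w)}
        = Nat.card {w : List L4 // w.length = 2*(m+1) ∧
            (w.count a = w.count abar ∧ w.count bbar = w.count b + 2)} := by
      refine Nat.card_congr (reflEquiv (auxB 0) ?_ ?_ ?_ ?_)
      · intro w hw
        obtain ⟨hl, hbal, hbad⟩ := hw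
        simp only [BalAB] at hbal
        refine ⟨by rw [ab_len]; exact hl, ?_, ?_⟩
        · rw [ab_count_a, ab_count_abar]; exact hbal.1
        · have := ab_bal w 0 hbad; omega
      · intro w hw
        obtain ⟨hl, hA, hB2⟩ := hw
        have hbad : ¬ GoodB 0 w := fun hg => by have := goodB_self hg; omega
        refine ⟨by rw [ab_len]; exact hl, ⟨?_, ?_⟩, ab_bad w 0 hbad⟩
        · rw [ab_count_a, ab_count_abar]; exact hA
        · have := ab_bal w 0 hbad; omega
      · intro w hw; exact ab_invol w 0 hw.2.2
      · intro w hw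
        refine ab_invol w 0 (fun hg => ?_)
        have := goodB_self hg
        omega
    have hEB : Nat.card {w : List L4 // w.length = 2*(m+1) ∧ (BalAB w ∧ ¬ GoodB 0 w)}
        = (2*(m+1)).choose (m+2) * (2*(m+1)).choose (m+2) := by
      rw [eB, card_iff (fun w => ?_), card_count (2*(m+1)) m (m+2), hsym]
      constructor
      · rintro ⟨h1, h2, h3⟩
        have := count_total w
        exact ⟨h1, by omega, by omega⟩
      · rintro ⟨h1, h2, h3⟩
        have := count_total w
        exact ⟨h1, by omega, by omega⟩
    -- the double reflection
    have eAB1 : Nat.card {w : List L4 //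
          w.length = 2*(m+1) ∧ (BalAB w ∧ ¬ GoodA 0 w ∧ ¬ GoodB 0 w)}
        = Nat.card {w : List L4 // w.length = 2*(m+1) ∧
            ((w.count abar = w.count a + 2 ∧ w.count b = w.count bbar) ∧ ¬ GoodB 0 w)} := by
      refine Nat.card_congr (reflEquiv (auxA 0) ?_ ?_ ?_ ?_)
      · intro w hw
        obtain ⟨hl, hbal, hbadA, hbadB⟩ := hw
        simp only [BalAB] at hbal
        refine ⟨by rw [aa_len]; exact hl, ⟨?_, ?_⟩, ?_⟩
        · have := aa_bal w 0 hbadA; omega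
        · rw [aa_count_b, aa_count_bbar]; exact hbal.2
        · exact fun hg => hbadB ((aa_goodB w 0 0).1 hg)
      · intro w hw
        obtain ⟨hl, ⟨hA2, hB⟩, hbadB⟩ := hw
        have hbadA : ¬ GoodA 0 w := fun hg => by have := goodA_self hg; omega
        refine ⟨by rw [aa_len]; exact hl, ⟨?_, ?_⟩, aa_bad w 0 hbadA, ?_⟩
        · have := aa_bal w 0 hbadA; omega
        · rw [aa_count_b, aa_count_bbar]; exact hB
        · exact fun hg => hbadB ((aa_goodB w 0 0).1 hg)
      · intro w hw; exact aa_invol w 0 hw.2.2.1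
      · intro w hw
        refine aa_invol w 0 (fun hg => ?_)
        have := goodA_self hg
        have := hw.2.1.1
        omega
    have eAB2 : Nat.card {w : List L4 // w.length = 2*(m+1) ∧
            ((w.count abar = w.count a + 2 ∧ w.count b = w.count bbar) ∧ ¬ GoodB 0 w)}
        = Nat.card {w : List L4 // w.length = 2*(m+1) ∧
            (w.count abar = w.count a + 2 ∧ w.count bbar = w.count b + 2)} := by
      refine Nat.card_congr (reflEquiv (auxB 0) ?_ ?_ ?_ ?_)
      · intro w hw
        obtain ⟨hl, ⟨hA2, hB⟩, hbadB⟩ := hw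
        refine ⟨by rw [ab_len]; exact hl, ?_, ?_⟩
        · rw [ab_count_a, ab_count_abar]; exact hA2
        · have := ab_bal w 0 hbadB; omega
      · intro w hw
        obtain ⟨hl, hA2, hB2⟩ := hw
        have hbadB : ¬ GoodB 0 w := fun hg => by have := goodB_self hg; omega
        refine ⟨by rw [ab_len]; exact hl, ⟨⟨?_, ?_⟩, ab_bad w 0 hbadB⟩⟩
        · rw [ab_count_a, ab_count_abar]; exact hA2
        · have := ab_bal w 0 hbadB; omega
      · intro w hw; exact ab_invol w 0 hw.2.2
      · intro w hw
        refine ab_invol w 0 (fun hg => ?_)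
        have := goodB_self hg
        have := hw.2.2
        omega
    have hEAB : Nat.card {w : List L4 //
          w.length = 2*(m+1) ∧ (BalAB w ∧ ¬ GoodA 0 w ∧ ¬ GoodB 0 w)}
        = (2*(m+1)).choose (m+3) * (2*(m+1)).choose (m+1) := by
      rw [eAB1, eAB2]
      obtain _ | k := m
      · have : IsEmpty {w : List L4 // w.length = 2*(0+1) ∧
            (w.count abar = w.count a + 2 ∧ w.count bbar = w.count b + 2)} := by
          constructor
          rintro ⟨w, h1, h2, h3⟩
          have := count_total w
          omega
        rw [Nat.card_of_isEmpty]
        have h0 : (2*(0+1)).choose (0+3) = 0 := by decide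
        simp [h0]
      · show Nat.card {w : List L4 // w.length = 2*(k+2) ∧
            (w.count abar = w.count a + 2 ∧ w.count bbar = w.count b + 2)}
          = (2*(k+2)).choose (k+4) * (2*(k+2)).choose (k+2)
        have hsym2 : (2*(k+2)).choose k = (2*(k+2)).choose (k+4) := by
          have h := Nat.choose_symm (n := 2*(k+2)) (k := k+4) (by omega)
          rw [show 2*(k+2) - (k+4) = k from by omega] at h
          exact h
        rw [card_iff (fun w => ?_), card_count (2*(k+2)) k (k+2), hsym2]
        constructor
        · rintro ⟨h1, h2, h3⟩
          have := count_total w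
          exact ⟨h1, by omega, by omega⟩
        · rintro ⟨h1, h2, h3⟩
          have := count_total w
          exact ⟨h1, by omega, by omega⟩
    have hci := catalan_identity m
    omega
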